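/- arXiv:1707.09825 — 3 statements merged into one kernel-verified Lean document; each statement's English description precedes it below -/
import Mathlib

section
/- Let $H \in (1/2, 1)$, $\lambda \ge 0$ and $0 \le s < t$, and set $T := t - s$. Then $H(2H-1) \int_s^t \int_s^t e^{-\lambda(2t - u - v)} |u - v|^{2H-2} \, du \, dv = H\, T^{2H} \Big( e^{-2\lambda T} \int_0^1 e^{\lambda T u} u^{2H-1} \, du + \int_0^1 e^{-\lambda T u} u^{2H-1} \, du \Big)$. Equivalently, writing $\gamma^*(a,z) := \Gamma(a)^{-1} \int_0^1 u^{a-1} e^{-z u} \, du$, the left-hand side equals $H \Gamma(2H) T^{2H} \big( e^{-2\lambda T} \gamma^*(2H, -\lambda T) + \gamma^*(2H, \lambda T) \big)$. (This is the explicit variance formula of Proposition 4.3 for the fractional stochastic integral $\int_s^t e^{-\lambda(t-u)} dB^H(u)$ with Hurst index $H$.) -/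
/-!
After substituting `x = t - u`, `y = t - v` the kernel becomes `e^{-λ(x+y)} |x - y|^{a-1}` on
`[0, T]²`, with `a = 2H - 1` and `T = t - s`. Write `E_b^c(z) = ∫_0^z e^{bw} w^c dw`
(`expRpowIntegral b c z`). Splitting the inner integral at `y = x` gives
`e^{-2λx} (E_λ^{a-1}(x) + E_{-λ}^{a-1}(T - x))`. Integration by parts,
`a E_b^{a-1}(z) = e^{bz} z^a - b E_b^a(z)`, shows that `T ↦ E_{-b}^a(T) + e^{-2bT} E_b^a(T)` is a
primitive of `2a e^{-2bT} E_b^{a-1}(T)`; with `b = ±λ` this evaluates the outer integral, and the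
scaling `w = T u` turns `E_{±λ}^a(T)` into integrals over `[0, 1]`.
-/

open Real intervalIntegral Set
open MeasureTheory (volume)

/-- The (normalized) incomplete gamma function
`γ*(a, z) = Γ(a)⁻¹ ∫_0^1 u^{a-1} e^{-z u} du`. -/
noncomputable def incGamma (a z : ℝ) : ℝ :=
  (Real.Gamma a)⁻¹ * ∫ u in (0 : ℝ)..1, u ^ (a - 1) * Real.exp (-z * u)

noncomputable def expRpowIntegral (b c z : ℝ) : ℝ :=
  ∫ w in (0 : ℝ)..z, exp (b * w) * w ^ c

section ExpRpowIntegral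

variable {c : ℝ}

lemma continuous_exp_mul_rpow (hc : 0 ≤ c) (b : ℝ) :
    Continuous fun w : ℝ => exp (b * w) * w ^ c :=
  (continuous_const.mul continuous_id).rexp.mul (continuous_id.rpow_const fun _ => Or.inr hc)

lemma intervalIntegrable_exp_mul_rpow (hc : -1 < c) (b z₁ z₂ : ℝ) :
    IntervalIntegrable (fun w => exp (b * w) * w ^ c) volume z₁ z₂ :=
  (intervalIntegrable_rpow' hc).continuousOn_mul
    (continuous_const.mul continuous_id).rexp.continuousOn

lemma continuous_expRpowIntegral (hc : -1 < c) (b : ℝ) : Continuous (expRpowIntegral b c) :=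
  continuous_primitive (intervalIntegrable_exp_mul_rpow hc b) 0

lemma hasDerivAt_expRpowIntegral (hc : 0 ≤ c) (b z : ℝ) :
    HasDerivAt (expRpowIntegral b c) (exp (b * z) * z ^ c) z :=
  ((continuous_exp_mul_rpow hc b).integral_hasStrictDerivAt 0 z).hasDerivAt

lemma expRpowIntegral_zero (b c : ℝ) : expRpowIntegral b c 0 = 0 :=
  integral_same

lemma mul_expRpowIntegral_sub_one (hc : 0 < c) (b : ℝ) {z : ℝ} (hz : 0 ≤ z) :
    c * expRpowIntegral b (c - 1) z = exp (b * z) * z ^ c - b * expRpowIntegral b c z := by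
  have hint (p : ℝ) (hp : -1 < p) (k : ℝ) :
      IntervalIntegrable (fun w => k * (exp (b * w) * w ^ p)) volume 0 z :=
    (intervalIntegrable_exp_mul_rpow hp b 0 z).const_mul k
  have hderiv (w : ℝ) (hw : w ∈ Ioo 0 z) : HasDerivWithinAt (fun w => exp (b * w) * w ^ c)
      (b * (exp (b * w) * w ^ c) + c * (exp (b * w) * w ^ (c - 1))) (Ioi w) w := by
    have h := ((hasDerivAt_id' w).const_mul b).exp.mul
      (hasDerivAt_rpow_const (p := c) (Or.inl hw.1.ne'))
    exact (h.congr_deriv (by ring)).hasDerivWithinAt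
  have hFTC := integral_eq_sub_of_hasDeriv_right_of_le hz
    (continuous_exp_mul_rpow hc.le b).continuousOn hderiv
    ((hint c (by linarith) b).add (hint (c - 1) (by linarith) c))
  rw [integral_add (hint c (by linarith) b) (hint (c - 1) (by linarith) c), integral_const_mul,
    integral_const_mul, zero_rpow hc.ne', mul_zero, sub_zero] at hFTC
  rw [expRpowIntegral, expRpowIntegral]
  linarith

lemma two_mul_integral_exp_mul_expRpowIntegral (hc : 0 < c) (b : ℝ) {T : ℝ} (hT : 0 ≤ T) :
    2 * c * ∫ z in (0 : ℝ)..T, exp (-2 * b * z) * expRpowIntegral b (c - 1) z =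
      expRpowIntegral (-b) c T + exp (-2 * b * T) * expRpowIntegral b c T := by
  have hderiv (z : ℝ) (hz : z ∈ uIcc 0 T) : HasDerivAt
      (fun z => expRpowIntegral (-b) c z + exp (-2 * b * z) * expRpowIntegral b c z)
      (2 * c * (exp (-2 * b * z) * expRpowIntegral b (c - 1) z)) z := by
    have h := (hasDerivAt_expRpowIntegral hc.le (-b) z).add
      (((hasDerivAt_id' z).const_mul (-2 * b)).exp.mul (hasDerivAt_expRpowIntegral hc.le b z))
    have hexp : exp (-2 * b * z) * exp (b * z) = exp (-b * z) := by
      rw [← exp_add]; ring_nf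
    refine h.congr_deriv ?_
    rw [show 2 * c * (exp (-2 * b * z) * expRpowIntegral b (c - 1) z) =
      2 * exp (-2 * b * z) * (c * expRpowIntegral b (c - 1) z) by ring,
      mul_expRpowIntegral_sub_one hc b (uIcc_of_le hT ▸ hz).1]
    linear_combination (-z ^ c) * hexp
  have hcont : Continuous fun z => 2 * c * (exp (-2 * b * z) * expRpowIntegral b (c - 1) z) :=
    continuous_const.mul ((continuous_const.mul continuous_id).rexp.mul
      (continuous_expRpowIntegral (by linarith) b))
  rw [← integral_const_mul, integral_eq_sub_of_hasDerivAt hderiv (hcont.intervalIntegrable 0 T)]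
  simp [expRpowIntegral_zero]

lemma integral_exp_mul_abs_sub_rpow (hc : -1 < c) (lam : ℝ) {x T : ℝ} (hx : x ∈ Icc 0 T) :
    ∫ y in (0 : ℝ)..T, exp (-lam * (x + y)) * |x - y| ^ c =
      exp (-2 * lam * x) * (expRpowIntegral lam c x + expRpowIntegral (-lam) c (T - x)) := by
  set K := fun y => exp (-lam * (x + y)) * |x - y| ^ c
  set g := fun b w => exp (-2 * lam * x) * (exp (b * w) * w ^ c)
  have hleft : EqOn K (fun y => g lam (x - y)) (uIcc 0 x) := by
    intro y hy
    rw [uIcc_of_le hx.1] at hy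
    simp only [K, g, abs_of_nonneg (sub_nonneg.2 hy.2), ← mul_assoc, ← exp_add]
    ring_nf
  have hright : EqOn K (fun y => g (-lam) (y - x)) (uIcc x T) := by
    intro y hy
    rw [uIcc_of_le hx.2] at hy
    simp only [K, g, abs_sub_comm x y, abs_of_nonneg (sub_nonneg.2 hy.1), ← mul_assoc,
      ← exp_add]
    ring_nf
  have hg (b z₁ z₂ : ℝ) : IntervalIntegrable (g b) volume z₁ z₂ :=
    (intervalIntegrable_exp_mul_rpow hc b z₁ z₂).const_mul _
  have hKleft : IntervalIntegrable K volume 0 x := by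
    have := (hg lam x 0).comp_sub_left x
    rw [sub_self, sub_zero] at this
    exact this.congr_uIoo (hleft.symm.mono uIoo_subset_uIcc_self)
  have hKright : IntervalIntegrable K volume x T := by
    have := (hg (-lam) 0 (T - x)).comp_sub_right x
    rw [zero_add, sub_add_cancel] at this
    exact this.congr_uIoo (hright.symm.mono uIoo_subset_uIcc_self)
  rw [← integral_add_adjacent_intervals hKleft hKright, integral_congr hleft,
    integral_congr hright, integral_comp_sub_left (g lam), integral_comp_sub_right (g (-lam)),
    sub_self, sub_zero, integral_const_mul, integral_const_mul, mul_add]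
  rfl

lemma mul_integral_integral_exp_mul_abs_sub_rpow {a : ℝ} (ha : 0 < a) (lam : ℝ) {T : ℝ}
    (hT : 0 ≤ T) :
    a * ∫ x in (0 : ℝ)..T, ∫ y in (0 : ℝ)..T, exp (-lam * (x + y)) * |x - y| ^ (a - 1) =
      exp (-2 * lam * T) * expRpowIntegral lam a T + expRpowIntegral (-lam) a T := by
  have hΦ (b : ℝ) : Continuous (expRpowIntegral b (a - 1)) :=
    continuous_expRpowIntegral (by linarith) b
  have hreflect :
      ∫ x in (0 : ℝ)..T, exp (-2 * lam * x) * expRpowIntegral (-lam) (a - 1) (T - x) =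
        exp (-2 * lam * T) *
          ∫ z in (0 : ℝ)..T, exp (-2 * -lam * z) * expRpowIntegral (-lam) (a - 1) z := by
    have h := integral_comp_sub_left (a := 0) (b := T)
      (fun z => exp (-2 * lam * T) * (exp (-2 * -lam * z) * expRpowIntegral (-lam) (a - 1) z)) T
    rw [sub_self, sub_zero] at h
    rw [← integral_const_mul, ← h]
    refine integral_congr fun x _ => ?_
    simp only [← mul_assoc, ← exp_add]
    ring_nf
  rw [integral_congr fun x hx =>
      integral_exp_mul_abs_sub_rpow (by linarith) lam (uIcc_of_le hT ▸ hx)]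
  simp only [mul_add]
  rw [integral_add (Continuous.intervalIntegrable (by fun_prop) _ _)
    (Continuous.intervalIntegrable (by fun_prop) _ _), hreflect]
  have h₁ := two_mul_integral_exp_mul_expRpowIntegral ha lam hT
  have h₂ := two_mul_integral_exp_mul_expRpowIntegral ha (-lam) hT
  have hexpT : exp (-2 * lam * T) * exp (-2 * -lam * T) = 1 := by
    rw [← exp_add]; ring_nf; exact exp_zero
  rw [neg_neg] at h₂
  linear_combination
    h₁ / 2 + exp (-2 * lam * T) * h₂ / 2 + expRpowIntegral (-lam) a T * hexpT / 2

end ExpRpowIntegral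

lemma integral_integral_comp_sub_left (f : ℝ → ℝ → ℝ) (s t : ℝ) :
    ∫ u in s..t, ∫ v in s..t, f (t - u) (t - v) =
      ∫ x in (0 : ℝ)..t - s, ∫ y in (0 : ℝ)..t - s, f x y := by
  simp only [integral_comp_sub_left (f _) t, sub_self]
  exact (integral_comp_sub_left (fun x => ∫ y in (0 : ℝ)..t - s, f x y) t).trans
    (by rw [sub_self])

lemma integral_integral_exp_mul_abs_sub_rpow (lam p s t : ℝ) :
    ∫ u in s..t, ∫ v in s..t, exp (-lam * (2 * t - u - v)) * |u - v| ^ p =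
      ∫ x in (0 : ℝ)..t - s, ∫ y in (0 : ℝ)..t - s, exp (-lam * (x + y)) * |x - y| ^ p := by
  rw [← integral_integral_comp_sub_left]
  refine integral_congr fun u _ => integral_congr fun v _ => ?_
  simp only [sub_sub_sub_cancel_left, abs_sub_comm v u]
  ring_nf

lemma rpow_add_one_mul_integral_exp_mul_rpow (b c : ℝ) {T : ℝ} (hT : 0 < T) :
    T ^ (c + 1) * ∫ u in (0 : ℝ)..1, exp (b * T * u) * u ^ c = expRpowIntegral b c T := by
  have h := smul_integral_comp_mul_left (a := 0) (b := 1) (fun w => exp (b * w) * w ^ c) T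
  rw [mul_zero, mul_one, smul_eq_mul] at h
  rw [expRpowIntegral, ← h, rpow_add hT, rpow_one, mul_comm (T ^ c), mul_assoc,
    ← integral_const_mul]
  refine congrArg _ (integral_congr fun u hu => ?_)
  rw [uIcc_of_le zero_le_one] at hu
  simp only [mul_rpow hT.le hu.1, mul_assoc]
  ring

lemma Gamma_mul_incGamma {a : ℝ} (ha : Gamma a ≠ 0) (z : ℝ) :
    Gamma a * incGamma a z = ∫ u in (0 : ℝ)..1, exp (-z * u) * u ^ (a - 1) := by
  rw [incGamma, ← mul_assoc, mul_inv_cancel₀ ha, one_mul]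
  simp only [mul_comm]

theorem variance_formula_general (H lam s t : ℝ) (hH : H ∈ Set.Ioo (1/2 : ℝ) 1)
    (hst : s < t) :
    (H * (2 * H - 1) *
        ∫ u in s..t, ∫ v in s..t,
          Real.exp (-lam * (2 * t - u - v)) * |u - v| ^ (2 * H - 2)) =
      H * (t - s) ^ (2 * H) *
        (Real.exp (-2 * lam * (t - s)) *
            (∫ u in (0 : ℝ)..1, Real.exp (lam * (t - s) * u) * u ^ (2 * H - 1)) +
          ∫ u in (0 : ℝ)..1, Real.exp (-lam * (t - s) * u) * u ^ (2 * H - 1)) ∧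
    (H * (2 * H - 1) *
        ∫ u in s..t, ∫ v in s..t,
          Real.exp (-lam * (2 * t - u - v)) * |u - v| ^ (2 * H - 2)) =
      H * Real.Gamma (2 * H) * (t - s) ^ (2 * H) *
        (Real.exp (-2 * lam * (t - s)) * incGamma (2 * H) (-lam * (t - s)) +
          incGamma (2 * H) (lam * (t - s))) := by
  have ha : 0 < 2 * H - 1 := by linarith [hH.1]
  have hT : 0 < t - s := sub_pos.2 hst
  have hΓ : Gamma (2 * H) ≠ 0 := (Gamma_pos_of_pos (by linarith)).ne'
  have hdouble := mul_integral_integral_exp_mul_abs_sub_rpow ha lam hT.le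
  rw [← integral_integral_exp_mul_abs_sub_rpow, show 2 * H - 1 - 1 = 2 * H - 2 by ring]
    at hdouble
  have hscale (b : ℝ) := rpow_add_one_mul_integral_exp_mul_rpow b (2 * H - 1) hT
  rw [show 2 * H - 1 + 1 = 2 * H by ring] at hscale
  rw [mul_assoc H, hdouble, ← hscale, ← hscale]
  refine ⟨by ring, ?_⟩
  have hinc₁ := Gamma_mul_incGamma hΓ (-lam * (t - s))
  have hinc₂ := Gamma_mul_incGamma hΓ (lam * (t - s))
  simp only [neg_mul, neg_neg] at hinc₁ hinc₂ ⊢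
  linear_combination (-H * (t - s) ^ (2 * H) * exp (-(2 * lam * (t - s)))) * hinc₁ -
    H * (t - s) ^ (2 * H) * hinc₂

/-- Explicit variance formula of Proposition 4.3 for the fractional stochastic integral
`∫_s^t e^{-λ(t-u)} dB^H(u)` with Hurst index `H`. -/
theorem variance_formula (H lam s t : ℝ) (hH : H ∈ Set.Ioo (1/2 : ℝ) 1)
    (hlam : 0 ≤ lam) (hs : 0 ≤ s) (hst : s < t) :
    (H * (2 * H - 1) *
        ∫ u in s..t, ∫ v in s..t,
          Real.exp (-lam * (2 * t - u - v)) * |u - v| ^ (2 * H - 2)) =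
      H * (t - s) ^ (2 * H) *
        (Real.exp (-2 * lam * (t - s)) *
            (∫ u in (0 : ℝ)..1, Real.exp (lam * (t - s) * u) * u ^ (2 * H - 1)) +
          ∫ u in (0 : ℝ)..1, Real.exp (-lam * (t - s) * u) * u ^ (2 * H - 1)) ∧
    (H * (2 * H - 1) *
        ∫ u in s..t, ∫ v in s..t,
          Real.exp (-lam * (2 * t - u - v)) * |u - v| ^ (2 * H - 2)) =
      H * Real.Gamma (2 * H) * (t - s) ^ (2 * H) *
        (Real.exp (-2 * lam * (t - s)) * incGamma (2 * H) (-lam * (t - s)) +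
          incGamma (2 * H) (lam * (t - s))) :=
  variance_formula_general H lam s t hH hst
end

section
/- Let $H \in (1/2, 1)$. There exists a constant $C > 0$ depending only on $H$ such that for all $\lambda \ge 0$, all $t \ge 0$ and all $h > 0$, $\big| \sigma_\lambda^H(t+h) - \sigma_\lambda^H(t) \big| \le C \big( 1 + \lambda\, t^{H} h^{1-H} \big) h^{H}$. (This is part (ii) of Proposition 4.4, stated for the explicit standard-deviation function $\sigma_\lambda^H$.) -/
/-!
Since `e^{-2x} e^{xu} = e^{-x(2-u)}`, `σ_λ^H(t) = t^H √(S(λt))` with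
`S(x) = H ∫_0^1 (e^{-x(2-u)} + e^{-xu}) u^{2H-1} du`. For `x ≥ 0` the weight is at most
`2 u^{2H-1}`, so `0 ≤ S ≤ 1`; `S` is decreasing; and `1 - e^{-s} ≤ s` gives
`S(x) - S(y) ≤ 2(y - x) S(x)`, which together with `S ≤ 1` makes `√S` 2-Lipschitz on
`[0, ∞)`. The increment of `σ_λ^H` then splits into `((t+h)^H - t^H) √S ≤ h^H`, by
subadditivity of `s ↦ s^H`, and
`t^H (√S(λt) - √S(λ(t+h))) ≤ 2λ t^H h = 2λ t^H h^{1-H} h^H`.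
-/

open Real intervalIntegral

/-- The standard deviation `σ_λ^H(t)` of the fractional stochastic integral
`∫_0^t e^{-λ(t-u)} dB^H(u)`. -/
noncomputable def sigmaH (H lam t : ℝ) : ℝ :=
  Real.sqrt (H * t ^ (2 * H) *
    (Real.exp (-2 * lam * t) * (∫ u in (0 : ℝ)..1, Real.exp (lam * t * u) * u ^ (2 * H - 1)) +
      ∫ u in (0 : ℝ)..1, Real.exp (-lam * t * u) * u ^ (2 * H - 1)))

lemma exp_neg_mul_sub_exp_neg_mul_le (x y c : ℝ) :
    exp (-(x * c)) - exp (-(y * c)) ≤ (y - x) * c * exp (-(x * c)) := by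
  have hsplit : exp (-(y * c)) = exp (-(x * c)) * exp (-((y - x) * c)) := by
    rw [← exp_add]; ring_nf
  have := add_one_le_exp (-((y - x) * c))
  rw [hsplit]
  nlinarith [exp_pos (-(x * c))]

lemma intervalIntegrable_mul_rpow {r : ℝ} (hr : -1 < r) {g : ℝ → ℝ} (hg : Continuous g)
    (a b : ℝ) :
    IntervalIntegrable (fun u => g u * u ^ r) MeasureTheory.volume a b :=
  (intervalIntegrable_rpow' hr).continuousOn_mul hg.continuousOn

lemma abs_mul_sub_mul_le {a a' b b' : ℝ} (ha : 0 ≤ a) (haa' : a ≤ a') (hb' : 0 ≤ b')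
    (hbb' : b' ≤ b) :
    |a' * b' - a * b| ≤ (a' - a) * b' + a * (b - b') := by
  have h₁ : 0 ≤ (a' - a) * b' := mul_nonneg (sub_nonneg.mpr haa') hb'
  have h₂ : 0 ≤ a * (b - b') := mul_nonneg ha (sub_nonneg.mpr hbb')
  rw [abs_le]
  constructor <;> nlinarith

lemma sqrt_sub_sqrt_le_of_sub_le_mul {a b d : ℝ} (hd : 0 ≤ d) (ha : a ≤ 1)
    (hab : a - b ≤ d * a) :
    √a - √b ≤ d := by
  rcases le_or_gt (√a) (√b) with hle | hlt
  · linarith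
  have hsa : 0 < √a := (sqrt_nonneg b).trans_lt hlt
  have hb : b ≤ √b ^ 2 := by
    rcases le_total 0 b with hb | hb
    · rw [sq_sqrt hb]
    · nlinarith [sq_nonneg √b]
  have hmul : (√a - √b) * √a ≤ d * √a * √a := by
    nlinarith [sq_sqrt (sqrt_pos.mp hsa).le, mul_nonneg (sub_nonneg.mpr hlt.le) (sqrt_nonneg b)]
  have : √a - √b ≤ d * √a := le_of_mul_le_mul_right hmul hsa
  nlinarith [sqrt_le_one.mpr ha]

namespace SigmaH

noncomputable def varianceKernel (H x u : ℝ) : ℝ :=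
  (exp (-(x * (2 - u))) + exp (-(x * u))) * u ^ (2 * H - 1)

noncomputable def normalizedVariance (H x : ℝ) : ℝ :=
  H * ∫ u in (0 : ℝ)..1, varianceKernel H x u

variable {H x y u : ℝ}

lemma integral_rpow_two_mul_sub_one (hH : 0 < H) :
    ∫ u in (0 : ℝ)..1, u ^ (2 * H - 1) = 1 / (2 * H) := by
  rw [integral_rpow (Or.inl (by linarith)), sub_add_cancel, one_rpow, zero_rpow (by positivity)]
  ring

lemma varianceKernel_le (hx : 0 ≤ x) (hu : u ∈ Set.Icc (0 : ℝ) 1) :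
    varianceKernel H x u ≤ 2 * u ^ (2 * H - 1) := by
  have h₁ : exp (-(x * (2 - u))) ≤ 1 := exp_le_one_iff.mpr (by nlinarith [hu.2])
  have h₂ : exp (-(x * u)) ≤ 1 := exp_le_one_iff.mpr (by nlinarith [hu.1])
  unfold varianceKernel
  gcongr
  · exact rpow_nonneg hu.1 _
  · linarith

lemma varianceKernel_anti (hxy : x ≤ y) (hu : u ∈ Set.Icc (0 : ℝ) 1) :
    varianceKernel H y u ≤ varianceKernel H x u := by
  unfold varianceKernel
  gcongr
  · exact rpow_nonneg hu.1 _
  · linarith [hu.2]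
  · exact hu.1

lemma varianceKernel_sub_le (hxy : x ≤ y) (hu : u ∈ Set.Icc (0 : ℝ) 1) :
    varianceKernel H x u - varianceKernel H y u ≤ 2 * (y - x) * varianceKernel H x u := by
  have h₁ := exp_neg_mul_sub_exp_neg_mul_le x y (2 - u)
  have h₂ := exp_neg_mul_sub_exp_neg_mul_le x y u
  have hd : 0 ≤ y - x := sub_nonneg.mpr hxy
  have hexp : exp (-(x * (2 - u))) - exp (-(y * (2 - u))) + (exp (-(x * u)) - exp (-(y * u))) ≤
      2 * (y - x) * (exp (-(x * (2 - u))) + exp (-(x * u))) := by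
    nlinarith [hu.1, hu.2, mul_nonneg hd (exp_pos (-(x * (2 - u)))).le,
      mul_nonneg hd (exp_pos (-(x * u))).le]
  unfold varianceKernel
  have := mul_le_mul_of_nonneg_right hexp (rpow_nonneg hu.1 (2 * H - 1))
  linarith

lemma varianceKernel_intervalIntegrable (hH : 0 < H) (x : ℝ) :
    IntervalIntegrable (varianceKernel H x) MeasureTheory.volume 0 1 :=
  intervalIntegrable_mul_rpow (by linarith) (by fun_prop) 0 1

lemma normalizedVariance_le_one (hH : 0 < H) (hx : 0 ≤ x) : normalizedVariance H x ≤ 1 := by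
  have hint :
      ∫ u in (0 : ℝ)..1, varianceKernel H x u ≤ ∫ u in (0 : ℝ)..1, 2 * u ^ (2 * H - 1) :=
    integral_mono_on zero_le_one (varianceKernel_intervalIntegrable hH x)
      ((intervalIntegrable_rpow' (by linarith)).const_mul 2) fun _ hu => varianceKernel_le hx hu
  rw [integral_const_mul, integral_rpow_two_mul_sub_one hH] at hint
  calc normalizedVariance H x ≤ H * (2 * (1 / (2 * H))) := mul_le_mul_of_nonneg_left hint hH.le
    _ = 1 := by field_simp

lemma normalizedVariance_anti (hH : 0 < H) (hxy : x ≤ y) :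
    normalizedVariance H y ≤ normalizedVariance H x :=
  mul_le_mul_of_nonneg_left (integral_mono_on zero_le_one (varianceKernel_intervalIntegrable hH y)
    (varianceKernel_intervalIntegrable hH x) fun _ hu => varianceKernel_anti hxy hu) hH.le

lemma normalizedVariance_sub_le (hH : 0 < H) (hxy : x ≤ y) :
    normalizedVariance H x - normalizedVariance H y ≤ 2 * (y - x) * normalizedVariance H x := by
  have hint := integral_mono_on zero_le_one
    ((varianceKernel_intervalIntegrable hH x).sub (varianceKernel_intervalIntegrable hH y))
    ((varianceKernel_intervalIntegrable hH x).const_mul (2 * (y - x)))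
    fun _ hu => varianceKernel_sub_le hxy hu
  rw [integral_sub (varianceKernel_intervalIntegrable hH x)
    (varianceKernel_intervalIntegrable hH y), integral_const_mul] at hint
  unfold normalizedVariance
  nlinarith

lemma sqrt_normalizedVariance_sub_le (hH : 0 < H) (hx : 0 ≤ x) (hxy : x ≤ y) :
    √(normalizedVariance H x) - √(normalizedVariance H y) ≤ 2 * (y - x) :=
  sqrt_sub_sqrt_le_of_sub_le_mul (by linarith) (normalizedVariance_le_one hH hx)
    (normalizedVariance_sub_le hH hxy)

lemma sigmaH_eq_rpow_mul_sqrt (hH : 0 < H) (lam : ℝ) {t : ℝ} (ht : 0 ≤ t) :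
    sigmaH H lam t = t ^ H * √(normalizedVariance H (lam * t)) := by
  have hkernel : exp (-2 * lam * t) * (∫ u in (0 : ℝ)..1, exp (lam * t * u) * u ^ (2 * H - 1)) +
      ∫ u in (0 : ℝ)..1, exp (-lam * t * u) * u ^ (2 * H - 1) =
      ∫ u in (0 : ℝ)..1, varianceKernel H (lam * t) u := by
    rw [← integral_const_mul, ← integral_add
      ((intervalIntegrable_mul_rpow (by linarith) (by fun_prop) 0 1).const_mul _)
      (intervalIntegrable_mul_rpow (by linarith) (by fun_prop) 0 1)]
    refine integral_congr fun u _ => ?_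
    simp only [varianceKernel]
    rw [← mul_assoc, ← exp_add]
    ring_nf
  have hpow : t ^ (2 * H) = (t ^ H) ^ 2 := by
    rw [mul_comm, rpow_mul ht, rpow_two]
  rw [sigmaH, hkernel, hpow, normalizedVariance, mul_right_comm, sqrt_mul' _ (sq_nonneg _),
    sqrt_sq (rpow_nonneg ht H), mul_comm]

end SigmaH

open SigmaH in
/-- Part (ii) of Proposition 4.4, stated for the explicit standard-deviation
function `σ_λ^H`. -/
theorem sigmaH_increment_le (H : ℝ) (hH : H ∈ Set.Ioo (1/2 : ℝ) 1) :
    ∃ C > (0 : ℝ), ∀ lam ≥ (0 : ℝ), ∀ t ≥ (0 : ℝ), ∀ h > (0 : ℝ),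
      |sigmaH H lam (t + h) - sigmaH H lam t| ≤
        C * (1 + lam * t ^ H * h ^ (1 - H)) * h ^ H := by
  have hH0 : 0 < H := by linarith [hH.1]
  refine ⟨2, two_pos, fun lam hlam t ht h hh => ?_⟩
  have hx : 0 ≤ lam * t := mul_nonneg hlam ht
  have hxy : lam * t ≤ lam * (t + h) := by nlinarith
  have hS_anti := sqrt_le_sqrt (normalizedVariance_anti hH0 hxy)
  have hS_le_one := sqrt_le_one.mpr (normalizedVariance_le_one hH0 (hx.trans hxy))
  have hS_sub := sqrt_normalizedVariance_sub_le hH0 hx hxy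
  have hpow_mono : t ^ H ≤ (t + h) ^ H := rpow_le_rpow ht (by linarith) hH0.le
  have hpow_sub : (t + h) ^ H - t ^ H ≤ h ^ H := by
    linarith [rpow_add_le_add_rpow ht hh.le hH0.le hH.2.le]
  have hh_split : h = h ^ (1 - H) * h ^ H := by rw [← rpow_add hh, sub_add_cancel, rpow_one]
  calc |sigmaH H lam (t + h) - sigmaH H lam t|
      = |(t + h) ^ H * √(normalizedVariance H (lam * (t + h))) -
          t ^ H * √(normalizedVariance H (lam * t))| := by
        rw [sigmaH_eq_rpow_mul_sqrt hH0 lam (by linarith),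
          sigmaH_eq_rpow_mul_sqrt hH0 lam ht]
    _ ≤ ((t + h) ^ H - t ^ H) * √(normalizedVariance H (lam * (t + h))) +
        t ^ H * (√(normalizedVariance H (lam * t)) - √(normalizedVariance H (lam * (t + h)))) :=
        abs_mul_sub_mul_le (rpow_nonneg ht H) hpow_mono (sqrt_nonneg _) hS_anti
    _ ≤ h ^ H * 1 + t ^ H * (2 * (lam * (t + h) - lam * t)) := by gcongr
    _ = (1 + 2 * (lam * t ^ H * h ^ (1 - H))) * h ^ H := by
        linear_combination (2 * lam * t ^ H) * hh_split
    _ ≤ 2 * (1 + lam * t ^ H * h ^ (1 - H)) * h ^ H := by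
        gcongr
        linarith
end

section
/- Let $H \in [1/2, 1)$ and $t \ge 0$. Then there exists a constant $C > 0$ depending only on $H$ and $t$ such that for all $\lambda \ge 0$ and all $h \in (0, 1]$, $\big| \sigma_\lambda^H(t+h) - \sigma_\lambda^H(t) \big| \le C (1 + \lambda) h^{H}$. (This is the deterministic content of Corollary 4.5, which gives a common upper bound, valid for all $H \in [1/2,1)$, on the increments in time of the standard deviation of the fractional stochastic integral $\int_0^t e^{-\lambda(t-u)} dB^H(u)$.) -/
/-!
After the substitution `s = τ u`,
`σ_λ^H(τ)² = H (e^{-2λτ} ∫_0^τ e^{λs} s^{2H-1} ds + ∫_0^τ e^{-λs} s^{2H-1} ds)`.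
Going from `t` to `t + h` adds the integrals over `[t, t + h]`, a gain `P ≤ 2H h (1 + t)^{2H-1}`,
and multiplies the first term by `e^{-2λh}`, a loss of at most `2λh σ(t)²`. As
`|√a - √b| ≤ |a - b| / √b`, the increment of `σ` is at most `P / σ(t) + 2λh σ(t)`, and the
two-sided bound `t / (4 (1 + t) (1 + λ)) ≤ σ(t) ≤ t^H` turns this into
`C (1 + λ) h ≤ C (1 + λ) h^H`. The lower bound comes from `e^{-λs} ≥ 1/2` for `λs ≤ 1/2`; for `t = 0` the claim is just
`σ(h) ≤ h^H`.
-/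

open Real intervalIntegral

lemma abs_sqrt_sub_sqrt_le {a b : ℝ} (ha : 0 ≤ a) (hb : 0 < b) :
    |√a - √b| ≤ |a - b| / √b := by
  have hsb : 0 < √b := sqrt_pos.2 hb
  have hfactor : a - b = (√a - √b) * (√a + √b) := by
    linear_combination sq_sqrt hb.le - sq_sqrt ha
  rw [le_div_iff₀ hsb, hfactor, abs_mul, abs_of_pos (by positivity : 0 < √a + √b)]
  gcongr
  exact le_add_of_nonneg_left (sqrt_nonneg a)

lemma abs_sqrt_sub_sqrt_le_of_sub_eq {a b P N ε : ℝ} (ha : 0 ≤ a) (hb : 0 < b) (hP : 0 ≤ P)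
    (hN : 0 ≤ N) (hNε : N ≤ ε * b) (hab : a - b = P - N) :
    |√a - √b| ≤ P / √b + ε * √b := by
  calc |√a - √b| ≤ |a - b| / √b := abs_sqrt_sub_sqrt_le ha hb
    _ ≤ (P + ε * b) / √b := by
        gcongr
        rw [hab]
        exact (abs_sub _ _).trans (by rw [abs_of_nonneg hP, abs_of_nonneg hN]; linarith)
    _ = P / √b + ε * √b := by
        rw [add_div, mul_div_assoc, div_sqrt]

lemma intervalIntegrable_exp_mul_rpow_s8 (μ : ℝ) {q : ℝ} (hq : 0 ≤ q) (a b : ℝ) :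
    IntervalIntegrable (fun s => exp (μ * s) * s ^ q) MeasureTheory.volume a b :=
  ((continuous_exp.comp (continuous_const.mul continuous_id)).mul
    (continuous_rpow_const hq)).intervalIntegrable a b

lemma integral_exp_mul_rpow_nonneg (μ q : ℝ) {a b : ℝ} (ha : 0 ≤ a) (hab : a ≤ b) :
    0 ≤ ∫ s in a..b, exp (μ * s) * s ^ q :=
  integral_nonneg hab fun _ hs => mul_nonneg (exp_nonneg _) (rpow_nonneg (ha.trans hs.1) q)

lemma integral_exp_mul_rpow_eq_rpow_mul_unit (μ q : ℝ) {τ : ℝ} (hτ : 0 < τ) :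
    ∫ s in (0 : ℝ)..τ, exp (μ * s) * s ^ q =
      τ ^ (q + 1) * ∫ u in (0 : ℝ)..1, exp (μ * τ * u) * u ^ q := by
  have hsubst := smul_integral_comp_mul_left (a := 0) (b := 1)
    (fun s => exp (μ * s) * s ^ q) τ
  have hpull : ∫ u in (0 : ℝ)..1, exp (μ * (τ * u)) * (τ * u) ^ q =
      τ ^ q * ∫ u in (0 : ℝ)..1, exp (μ * τ * u) * u ^ q := by
    rw [← integral_const_mul]
    refine integral_congr fun u hu => ?_
    have hu0 : 0 ≤ u := by rcases Set.mem_uIcc.1 hu with h | h <;> linarith [h.1]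
    simp only [mul_rpow hτ.le hu0, mul_assoc]
    ring
  simp only [mul_zero, mul_one, smul_eq_mul] at hsubst
  rw [← hsubst, hpull, rpow_add_one hτ.ne']
  ring

lemma integral_zero_rpow {q : ℝ} (hq : 0 ≤ q) (b : ℝ) :
    ∫ s in (0 : ℝ)..b, s ^ q = b ^ (q + 1) / (q + 1) := by
  rw [integral_rpow (Or.inl (by linarith)), zero_rpow (by linarith), sub_zero]

lemma integral_rpow_le_sub_mul {q a b : ℝ} (hq : 0 ≤ q) (ha : 0 ≤ a) (hab : a ≤ b) :
    ∫ s in a..b, s ^ q ≤ (b - a) * b ^ q := by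
  have hmono := integral_mono_on hab
    ((continuous_rpow_const hq).intervalIntegrable (μ := MeasureTheory.volume) a b)
    intervalIntegrable_const fun s hs => rpow_le_rpow (ha.trans hs.1) hs.2 hq
  rwa [integral_const, smul_eq_mul] at hmono

lemma exp_mul_integral_exp_mul_rpow_le {lam q a b : ℝ} (hlam : 0 ≤ lam) (hq : 0 ≤ q)
    (ha : 0 ≤ a) (hab : a ≤ b) :
    exp (-2 * lam * b) * ∫ s in a..b, exp (lam * s) * s ^ q ≤ ∫ s in a..b, s ^ q := by
  rw [← integral_const_mul]
  refine integral_mono_on hab ((intervalIntegrable_exp_mul_rpow_s8 lam hq a b).const_mul _)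
    ((continuous_rpow_const hq).intervalIntegrable a b) fun s hs => ?_
  have hexp : exp (-2 * lam * b) * exp (lam * s) ≤ 1 := by
    rw [← exp_add, exp_le_one_iff]
    nlinarith [hs.2, ha.trans hs.1]
  calc exp (-2 * lam * b) * (exp (lam * s) * s ^ q)
      = exp (-2 * lam * b) * exp (lam * s) * s ^ q := by ring
    _ ≤ 1 * s ^ q := by gcongr; exact rpow_nonneg (ha.trans hs.1) q
    _ = s ^ q := one_mul _

lemma integral_exp_neg_mul_rpow_le {lam q a b : ℝ} (hlam : 0 ≤ lam) (hq : 0 ≤ q)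
    (ha : 0 ≤ a) (hab : a ≤ b) :
    ∫ s in a..b, exp (-lam * s) * s ^ q ≤ ∫ s in a..b, s ^ q := by
  refine integral_mono_on hab (intervalIntegrable_exp_mul_rpow_s8 (-lam) hq a b)
    ((continuous_rpow_const hq).intervalIntegrable a b) fun s hs => ?_
  have hexp : exp (-lam * s) ≤ 1 := exp_le_one_iff.2 (by nlinarith [ha.trans hs.1])
  calc exp (-lam * s) * s ^ q ≤ 1 * s ^ q := by gcongr; exact rpow_nonneg (ha.trans hs.1) q
    _ = s ^ q := one_mul _

lemma integral_exp_mul_rpow_increment_le {lam q t h : ℝ} (hlam : 0 ≤ lam) (hq : 0 ≤ q)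
    (ht : 0 ≤ t) (hh : 0 ≤ h) (hh1 : h ≤ 1) :
    exp (-2 * lam * (t + h)) * (∫ s in t..t + h, exp (lam * s) * s ^ q) +
      ∫ s in t..t + h, exp (-lam * s) * s ^ q ≤ 2 * h * (1 + t) ^ q := by
  have hA := exp_mul_integral_exp_mul_rpow_le hlam hq ht (le_add_of_nonneg_right hh)
  have hB := integral_exp_neg_mul_rpow_le hlam hq ht (le_add_of_nonneg_right hh)
  have hJ := integral_rpow_le_sub_mul hq ht (le_add_of_nonneg_right hh)
  have hpow : (t + h) ^ q ≤ (1 + t) ^ q := rpow_le_rpow (by positivity) (by linarith) hq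
  rw [add_sub_cancel_left] at hJ
  nlinarith [mul_le_mul_of_nonneg_left hpow hh]

lemma rpow_div_le_integral_exp_neg_mul_rpow {lam q κ t : ℝ} (hq : 0 ≤ q) (hκ : 0 ≤ κ)
    (hκt : κ ≤ t) (hlam : 0 ≤ lam) (hlamκ : lam * κ ≤ 1 / 2) :
    κ ^ (q + 1) / (2 * (q + 1)) ≤ ∫ s in (0 : ℝ)..t, exp (-lam * s) * s ^ q := by
  have hnonneg : ∀ s ∈ Set.Ioc (0 : ℝ) t, 0 ≤ exp (-lam * s) * s ^ q := fun s hs =>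
    mul_nonneg (exp_nonneg _) (rpow_nonneg hs.1.le q)
  calc κ ^ (q + 1) / (2 * (q + 1)) = ∫ s in (0 : ℝ)..κ, 1 / 2 * s ^ q := by
        rw [integral_const_mul, integral_zero_rpow hq]; field_simp
    _ ≤ ∫ s in (0 : ℝ)..κ, exp (-lam * s) * s ^ q := by
        refine integral_mono_on hκ (((continuous_rpow_const hq).intervalIntegrable _ _).const_mul _)
          (intervalIntegrable_exp_mul_rpow_s8 _ hq _ _) fun s hs => ?_
        have hexp : 1 / 2 ≤ exp (-lam * s) := by
          rw [neg_mul]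
          nlinarith [one_sub_le_exp_neg (lam * s), mul_le_mul_of_nonneg_left hs.2 hlam]
        gcongr
        exact rpow_nonneg hs.1 q
    _ ≤ ∫ s in (0 : ℝ)..t, exp (-lam * s) * s ^ q :=
        integral_mono_interval le_rfl hκ hκt
          (MeasureTheory.ae_restrict_of_forall_mem measurableSet_Ioc hnonneg)
          (intervalIntegrable_exp_mul_rpow_s8 _ hq _ _)

noncomputable def sigmaHSq (H lam τ : ℝ) : ℝ :=
  H * (exp (-2 * lam * τ) * (∫ s in (0 : ℝ)..τ, exp (lam * s) * s ^ (2 * H - 1)) +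
    ∫ s in (0 : ℝ)..τ, exp (-lam * s) * s ^ (2 * H - 1))

lemma sigmaH_eq_sqrt_sigmaHSq (H lam : ℝ) {τ : ℝ} (hτ : 0 < τ) :
    sigmaH H lam τ = √(sigmaHSq H lam τ) := by
  rw [sigmaH, sigmaHSq, integral_exp_mul_rpow_eq_rpow_mul_unit _ _ hτ,
    integral_exp_mul_rpow_eq_rpow_mul_unit _ _ hτ, sub_add_cancel]
  ring_nf

lemma sigmaH_zero {H : ℝ} (hH : H ≠ 0) (lam : ℝ) : sigmaH H lam 0 = 0 := by
  simp [sigmaH, zero_rpow (mul_ne_zero two_ne_zero hH)]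

lemma sigmaHSq_nonneg {H : ℝ} (hH : 0 ≤ H) (lam : ℝ) {τ : ℝ} (hτ : 0 ≤ τ) :
    0 ≤ sigmaHSq H lam τ := by
  have := integral_exp_mul_rpow_nonneg lam (2 * H - 1) le_rfl hτ
  have := integral_exp_mul_rpow_nonneg (-lam) (2 * H - 1) le_rfl hτ
  unfold sigmaHSq
  positivity

lemma mul_exp_mul_integral_le_sigmaHSq {H : ℝ} (hH : 0 ≤ H) (lam : ℝ) {t : ℝ} (ht : 0 ≤ t) :
    H * (exp (-2 * lam * t) * ∫ s in (0 : ℝ)..t, exp (lam * s) * s ^ (2 * H - 1)) ≤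
      sigmaHSq H lam t := by
  have := integral_exp_mul_rpow_nonneg (-lam) (2 * H - 1) le_rfl ht
  unfold sigmaHSq
  nlinarith

lemma sigmaHSq_pos {H : ℝ} (hH : 1 / 2 ≤ H) (lam : ℝ) {τ : ℝ} (hτ : 0 < τ) :
    0 < sigmaHSq H lam τ := by
  have hA := integral_exp_mul_rpow_nonneg lam (2 * H - 1) le_rfl hτ.le
  have hB : 0 < ∫ s in (0 : ℝ)..τ, exp (-lam * s) * s ^ (2 * H - 1) :=
    intervalIntegral_pos_of_pos_on (intervalIntegrable_exp_mul_rpow_s8 _ (by linarith) _ _)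
      (fun s hs => mul_pos (exp_pos _) (rpow_pos_of_pos hs.1 _)) hτ
  have : 0 < H := by linarith
  unfold sigmaHSq
  positivity

lemma sigmaHSq_le_rpow {H lam τ : ℝ} (hH : 1 / 2 ≤ H) (hlam : 0 ≤ lam) (hτ : 0 ≤ τ) :
    sigmaHSq H lam τ ≤ τ ^ (2 * H) := by
  have hq : 0 ≤ 2 * H - 1 := by linarith
  have hA := exp_mul_integral_exp_mul_rpow_le hlam hq le_rfl hτ
  have hB := integral_exp_neg_mul_rpow_le hlam hq le_rfl hτ
  rw [integral_zero_rpow hq, sub_add_cancel] at hA hB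
  calc sigmaHSq H lam τ ≤ H * (τ ^ (2 * H) / (2 * H) + τ ^ (2 * H) / (2 * H)) := by
        unfold sigmaHSq; gcongr
    _ = τ ^ (2 * H) := by field_simp; ring

lemma sigmaH_le_rpow {H lam τ : ℝ} (hH : 1 / 2 ≤ H) (hlam : 0 ≤ lam) (hτ : 0 ≤ τ) :
    sigmaH H lam τ ≤ τ ^ H := by
  rcases hτ.eq_or_lt with rfl | hτ
  · rw [sigmaH_zero (by linarith)]
    exact rpow_nonneg le_rfl H
  rw [sigmaH_eq_sqrt_sigmaHSq _ _ hτ, sqrt_le_iff, ← rpow_natCast, ← rpow_mul hτ.le]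
  exact ⟨rpow_nonneg hτ.le H, by simpa [mul_comm] using sigmaHSq_le_rpow hH hlam hτ.le⟩

lemma div_le_sigmaH {H lam t : ℝ} (hH : 1 / 2 ≤ H) (hH1 : H ≤ 1) (hlam : 0 ≤ lam) (ht : 0 < t) :
    t / (4 * (1 + t) * (1 + lam)) ≤ sigmaH H lam t := by
  set κ := t / (2 * (1 + t) * (1 + lam)) with hκ_def
  have hκ0 : 0 ≤ κ := by positivity
  have hκt : κ ≤ t := div_le_self ht.le (by nlinarith)
  have hκ1 : κ ≤ 1 := (div_le_one (by positivity)).2 (by nlinarith)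
  have hlamκ : lam * κ ≤ 1 / 2 := by
    rw [hκ_def, mul_div_assoc', div_le_iff₀ (by positivity)]
    nlinarith
  have hB := rpow_div_le_integral_exp_neg_mul_rpow (q := 2 * H - 1) (by linarith) hκ0 hκt hlam hlamκ
  rw [sub_add_cancel] at hB
  have hκsq : κ ^ 2 ≤ κ ^ (2 * H) := by
    rw [← rpow_two]
    exact rpow_le_rpow_of_exponent_ge' hκ0 hκ1 (by linarith) (by linarith)
  have hlow : (κ / 2) ^ 2 ≤ sigmaHSq H lam t := by
    have hA := integral_exp_mul_rpow_nonneg lam (2 * H - 1) le_rfl ht.le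
    calc (κ / 2) ^ 2 ≤ H * (κ ^ (2 * H) / (2 * (2 * H))) := by
          field_simp; nlinarith
      _ ≤ sigmaHSq H lam t := by
          unfold sigmaHSq
          nlinarith [mul_nonneg (exp_nonneg (-2 * lam * t)) hA]
  rw [sigmaH_eq_sqrt_sigmaHSq _ _ ht]
  calc t / (4 * (1 + t) * (1 + lam)) = κ / 2 := by rw [hκ_def]; field_simp; ring
    _ ≤ √(sigmaHSq H lam t) := (le_sqrt (by positivity) (le_trans (by positivity) hlow)).2 hlow

lemma sigmaHSq_add_sub (H lam t h : ℝ) (hH : 1 / 2 ≤ H) :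
    sigmaHSq H lam (t + h) - sigmaHSq H lam t =
      H * (exp (-2 * lam * (t + h)) * (∫ s in t..t + h, exp (lam * s) * s ^ (2 * H - 1)) +
          ∫ s in t..t + h, exp (-lam * s) * s ^ (2 * H - 1)) -
        (1 - exp (-(2 * lam * h))) *
          (H * (exp (-2 * lam * t) * ∫ s in (0 : ℝ)..t, exp (lam * s) * s ^ (2 * H - 1))) := by
  have hq : 0 ≤ 2 * H - 1 := by linarith
  have hsplit (μ : ℝ) := integral_add_adjacent_intervals
    (intervalIntegrable_exp_mul_rpow_s8 μ hq 0 t) (intervalIntegrable_exp_mul_rpow_s8 μ hq t (t + h))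
  have hexp : exp (-2 * lam * (t + h)) = exp (-2 * lam * t) * exp (-(2 * lam * h)) := by
    rw [← exp_add]; ring_nf
  rw [sigmaHSq, sigmaHSq, ← hsplit, ← hsplit, hexp]
  ring

lemma abs_sigmaH_add_sub_le {H lam t h : ℝ} (hH : 1 / 2 ≤ H) (hlam : 0 ≤ lam) (ht : 0 < t)
    (hh : 0 ≤ h) (hh1 : h ≤ 1) :
    |sigmaH H lam (t + h) - sigmaH H lam t| ≤
      2 * H * h * (1 + t) ^ (2 * H - 1) / sigmaH H lam t + 2 * lam * h * sigmaH H lam t := by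
  have hH0 : 0 ≤ H := by linarith
  set X := H * (exp (-2 * lam * t) * ∫ s in (0 : ℝ)..t, exp (lam * s) * s ^ (2 * H - 1))
  have hX0 : 0 ≤ X := by
    have := integral_exp_mul_rpow_nonneg lam (2 * H - 1) le_rfl ht.le
    positivity
  set P := H * (exp (-2 * lam * (t + h)) * (∫ s in t..t + h, exp (lam * s) * s ^ (2 * H - 1)) +
    ∫ s in t..t + h, exp (-lam * s) * s ^ (2 * H - 1))
  have hP0 : 0 ≤ P := by
    have := integral_exp_mul_rpow_nonneg lam (2 * H - 1) ht.le (le_add_of_nonneg_right hh)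
    have := integral_exp_mul_rpow_nonneg (-lam) (2 * H - 1) ht.le (le_add_of_nonneg_right hh)
    positivity
  have hP : P ≤ 2 * H * h * (1 + t) ^ (2 * H - 1) := by
    calc P ≤ H * (2 * h * (1 + t) ^ (2 * H - 1)) := mul_le_mul_of_nonneg_left
          (integral_exp_mul_rpow_increment_le hlam (by linarith) ht.le hh hh1) hH0
      _ = 2 * H * h * (1 + t) ^ (2 * H - 1) := by ring
  have hexp := one_sub_le_exp_neg (2 * lam * h)
  have hloss0 : 0 ≤ (1 - exp (-(2 * lam * h))) * X :=
    mul_nonneg (by linarith [exp_le_one_iff.2 (by nlinarith : -(2 * lam * h) ≤ 0)]) hX0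
  have hloss : (1 - exp (-(2 * lam * h))) * X ≤ 2 * lam * h * sigmaHSq H lam t :=
    mul_le_mul (by linarith) (mul_exp_mul_integral_le_sigmaHSq hH0 lam ht.le) hX0
      (by positivity)
  rw [sigmaH_eq_sqrt_sigmaHSq _ _ (by linarith), sigmaH_eq_sqrt_sigmaHSq _ _ ht]
  refine (abs_sqrt_sub_sqrt_le_of_sub_eq (sigmaHSq_nonneg hH0 lam (by linarith))
    (sigmaHSq_pos hH lam ht) hP0 hloss0 hloss (sigmaHSq_add_sub H lam t h hH)).trans ?_
  gcongr

lemma sigmaH_add_sub_le {H lam t h : ℝ} (hH : 1 / 2 ≤ H) (hH1 : H ≤ 1) (hlam : 0 ≤ lam)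
    (ht : 0 < t) (hh : 0 ≤ h) (hh1 : h ≤ 1) :
    |sigmaH H lam (t + h) - sigmaH H lam t| ≤
      (8 * H * (1 + t) ^ (2 * H) / t + 2 * t ^ H) * (1 + lam) * h := by
  have hgain : 2 * H * h * (1 + t) ^ (2 * H - 1) / (t / (4 * (1 + t) * (1 + lam))) =
      8 * H * (1 + t) ^ (2 * H) / t * (1 + lam) * h := by
    rw [rpow_sub_one (by positivity)]
    field_simp
    ring
  have hloss : 2 * lam * h * t ^ H ≤ 2 * t ^ H * (1 + lam) * h := by
    have := rpow_nonneg ht.le H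
    nlinarith
  calc |sigmaH H lam (t + h) - sigmaH H lam t|
      ≤ 2 * H * h * (1 + t) ^ (2 * H - 1) / sigmaH H lam t + 2 * lam * h * sigmaH H lam t :=
        abs_sigmaH_add_sub_le hH hlam ht hh hh1
    _ ≤ 2 * H * h * (1 + t) ^ (2 * H - 1) / (t / (4 * (1 + t) * (1 + lam))) +
        2 * lam * h * t ^ H := by
        gcongr
        exacts [div_le_sigmaH hH hH1 hlam ht, sigmaH_le_rpow hH hlam ht.le]
    _ ≤ _ := by rw [hgain]; linarith

/-- Deterministic content of Corollary 4.5: a common upper bound, valid for all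
`H ∈ [1/2, 1)`, on the increments in time of `σ_λ^H`. -/
theorem sigmaH_increment_uniform_le (H t : ℝ) (hH : H ∈ Set.Ico (1/2 : ℝ) 1) (ht : 0 ≤ t) :
    ∃ C > (0 : ℝ), ∀ lam ≥ (0 : ℝ), ∀ h ∈ Set.Ioc (0 : ℝ) 1,
      |sigmaH H lam (t + h) - sigmaH H lam t| ≤ C * (1 + lam) * h ^ H := by
  obtain ⟨hH, hH1⟩ := hH
  rcases ht.eq_or_lt with rfl | ht
  · refine ⟨1, one_pos, fun lam hlam h hh => ?_⟩
    rw [zero_add, sigmaH_zero (by linarith), sub_zero]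
    calc |sigmaH H lam h| = sigmaH H lam h := abs_of_nonneg (sqrt_nonneg _)
      _ ≤ h ^ H := sigmaH_le_rpow hH hlam hh.1.le
      _ ≤ 1 * (1 + lam) * h ^ H := by
          have := rpow_nonneg hh.1.le H
          nlinarith
  · refine ⟨8 * H * (1 + t) ^ (2 * H) / t + 2 * t ^ H, by positivity, fun lam hlam h hh => ?_⟩
    calc |sigmaH H lam (t + h) - sigmaH H lam t|
        ≤ (8 * H * (1 + t) ^ (2 * H) / t + 2 * t ^ H) * (1 + lam) * h :=
          sigmaH_add_sub_le hH hH1.le hlam ht hh.1.le hh.2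
      _ ≤ (8 * H * (1 + t) ^ (2 * H) / t + 2 * t ^ H) * (1 + lam) * h ^ H := by
          gcongr
          exact self_le_rpow_of_le_one hh.1.le hh.2 hH1.le
end
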